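/- arXiv:2510.12057 — 2 statements merged into one kernel-verified Lean document; each statement's English description precedes it below -/
import Mathlib

section
/- Let γ be a scalar system of SL_n-type. Then for each ordered pair (i,j) of distinct elements of {1,…,n} there exist a_{ij}, b_{ij} ∈ k, not both zero, such that: (1) for every λ ∈ ℤ^n, a_{ij}·q^{λ_i−λ_j} − b_{ij}·q^{λ_j−λ_i} ≠ 0 and γ({i},{j};λ)·(a_{ij}·q^{λ_i−λ_j} − b_{ij}·q^{λ_j−λ_i}) = a_{ij}·q^{λ_i−λ_j−1} − b_{ij}·q^{λ_j−λ_i+1}; (2) a_{ij}·a_{ji} = b_{ij}·b_{ji} for all distinct i, j; (3) a_{ij}·a_{jk}·b_{ik} = b_{ij}·b_{jk}·a_{ik} for all pairwise distinct i, j, k. Moreover, for each pair (i,j) the parameters are projectively unique: if a', b' ∈ k are not both zero and satisfy condition (1) for the pair (i,j), then there is a nonzero c ∈ k with a' = c·a_{ij} and b' = c·b_{ij}. (Conditions (2) and (3) say that the points [a_{ij} : b_{ij}] ∈ ℙ¹(k) form a point of the toric variety attached to the root system of sl_n, and the nonvanishing in (1) says this point avoids q^{2ℤ} at each root.) -/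
/-!
Relations (i), (iii), (iv) and (v) make `γ({i},{j};λ)` depend only on `λ_i - λ_j`, so
`g m = γ({i},{j};m e_i)` obeys `g m * ([2]_q - g (m - 1)) = 1` by (i) and (v). Its solutions are
the ratios `D (m - 1) / D m` with `D m = a q^m - b q^{-m}`, the general solution of
`D (m + 1) + D (m - 1) = [2]_q D m`, and `[a : b]` is read off from `g 0`. The toric relations
are identities between values at `λ = 0`: the rank-one one is (v), the rank-two one is (vi)
once (ii)–(iv) have factorized `γ({i},{j,l};λ) = γ({i},{j};λ) γ({i},{l};λ)`.
-/

open Finset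

/-- The indicator vector `e_S ∈ ℤ^n` of a subset `S ⊆ {1,…,n}`. -/
def eVec (n : ℕ) (S : Finset (Fin n)) : Fin n → ℤ := fun i => if i ∈ S then 1 else 0

/-- A scalar system of `T\SL_n`-type: a family of scalars `γ(S,T;λ) ∈ k`
indexed by pairs of disjoint subsets `S, T ⊆ {1,…,n}` and `λ ∈ ℤ^n`,
invariant under `λ ↦ λ + (1,…,1)` and normalized on empty sets,
satisfying the relations (i)–(vi) of Definition 5.4 of the paper. -/
structure ScalarSystem (n : ℕ) (k : Type*) [Field k] (q : k) where
  γ : Finset (Fin n) → Finset (Fin n) → (Fin n → ℤ) → k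
  periodic : ∀ (S T : Finset (Fin n)) (lam : Fin n → ℤ),
    γ S T (lam + eVec n Finset.univ) = γ S T lam
  empty_left : ∀ (T : Finset (Fin n)) (lam : Fin n → ℤ), γ ∅ T lam = 1
  empty_right : ∀ (S : Finset (Fin n)) (lam : Fin n → ℤ), γ S ∅ lam = 1
  rel1 : ∀ (S T : Finset (Fin n)) (lam : Fin n → ℤ), Disjoint S T →
    γ S T lam * γ T S (lam - eVec n S) = 1
  rel2 : ∀ (S : Finset (Fin n)) (i j : Fin n) (lam : Fin n → ℤ),
    i ≠ j → i ∉ S → j ∉ S →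
    γ (insert i S) {j} lam * γ {j} S (lam - eVec n S)
      + γ (insert j S) {i} lam * γ {i} S (lam - eVec n S) = q + q⁻¹
  rel3 : ∀ (S : Finset (Fin n)) (i j : Fin n) (lam : Fin n → ℤ),
    i ≠ j → i ∉ S → j ∉ S →
    γ S {i} lam * γ {i} (insert j S) (lam - eVec n (insert j S))
      = γ (insert i S) {j} (lam - eVec n {j}) * γ {j} S (lam - eVec n (insert j S))
  rel4 : ∀ (S T U : Finset (Fin n)) (lam : Fin n → ℤ),
    Disjoint S T → Disjoint S U → Disjoint T U →
    γ S T (lam + eVec n U) * γ (S ∪ T) U lam = γ S (T ∪ U) lam * γ T U lam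
  rel5 : ∀ (i j : Fin n) (lam : Fin n → ℤ), i ≠ j →
    γ {i} {j} lam + γ {j} {i} lam = q + q⁻¹
  rel6 : ∀ (i j l : Fin n) (lam : Fin n → ℤ), i ≠ j → j ≠ l → i ≠ l →
    γ {i} {j, l} lam + γ {j} {l, i} lam + γ {l} {i, j} lam
      = q * q + 1 + q⁻¹ * q⁻¹

section

variable {k : Type*} [Field k] {q : k}

lemma add_inv_ne_zero_of_pow_four_ne_one (hq : q ≠ 0) (h4 : q ^ 4 ≠ 1) : q + q⁻¹ ≠ 0 := by
  intro h
  have hsq : q ^ 2 = -1 := by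
    have := congrArg (q * ·) h
    field_simp at this
    linear_combination this
  exact h4 (by linear_combination (q ^ 2 - 1) * hsq)

lemma inv_ne_self_of_sq_ne_one (hq : q ≠ 0) (h2 : q ^ 2 ≠ 1) : q⁻¹ ≠ q := by
  intro h
  exact h2 (by rw [sq]; nth_rewrite 1 [← h]; exact inv_mul_cancel₀ hq)

lemma mul_zpow_sub_mul_zpow_of_recurrence (hq : q ≠ 0) (hq' : q⁻¹ ≠ q) {g : ℤ → k}
    (hg : ∀ m, g m * (q + q⁻¹ - g (m - 1)) = 1) (m : ℤ) :
    (g 0 - q) * q ^ m - (g 0 - q⁻¹) * q ^ (-m) ≠ 0 ∧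
      g m * ((g 0 - q) * q ^ m - (g 0 - q⁻¹) * q ^ (-m))
        = (g 0 - q) * q ^ (m - 1) - (g 0 - q⁻¹) * q ^ (-(m - 1)) := by
  set D : ℤ → k := fun m => (g 0 - q) * q ^ m - (g 0 - q⁻¹) * q ^ (-m)
  have hD : ∀ m, D (m + 1) = (q + q⁻¹) * D m - D (m - 1) := fun m => by
    simp only [D, zpow_add₀ hq, zpow_sub₀ hq, zpow_neg, zpow_one]
    field_simp
    ring
  change D m ≠ 0 ∧ g m * D m = D (m - 1)
  induction m using Int.inductionOn' (b := 0) with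
  | zero =>
    refine ⟨by simpa [D, sub_eq_zero] using hq', ?_⟩
    simp only [D, zpow_zero, neg_zero, zero_sub, neg_neg, zpow_neg_one, zpow_one]
    field_simp
    ring
  | succ m _ ih =>
    have hstep : D (m + 1) = (q + q⁻¹ - g m) * D m := by
      rw [hD]; linear_combination ih.2
    have hg' := hg (m + 1)
    rw [add_sub_cancel_right] at hg' ⊢
    exact ⟨hstep ▸ mul_ne_zero (right_ne_zero_of_mul_eq_one hg') ih.1,
      by rw [hstep]; linear_combination D m * hg'⟩
  | pred m _ ih =>
    have hstep : D (m - 1) = g m * D m := ih.2.symm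
    refine ⟨hstep ▸ mul_ne_zero (left_ne_zero_of_mul_eq_one (hg m)) ih.1, ?_⟩
    have hD' := hD (m - 1)
    rw [sub_add_cancel] at hD'
    linear_combination -D m * hg m + (q + q⁻¹ - g (m - 1)) * ih.2 - hD'

lemma exists_eq_mul_of_mul_eq_mul {a b a' b' : k}
    (hab : ¬(a = 0 ∧ b = 0)) (hab' : ¬(a' = 0 ∧ b' = 0)) (h : a' * b = b' * a) :
    ∃ c, c ≠ 0 ∧ a' = c * a ∧ b' = c * b := by
  by_cases ha : a = 0
  · have hb : b ≠ 0 := fun hb => hab ⟨ha, hb⟩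
    have ha' : a' = 0 := by simpa [ha, hb] using h
    exact ⟨b' / b, div_ne_zero (fun hb' => hab' ⟨ha', hb'⟩) hb, by simp [ha, ha'],
      (div_mul_cancel₀ b' hb).symm⟩
  · have ha' : a' ≠ 0 := fun ha' => hab' ⟨ha', by simpa [ha', ha] using h.symm⟩
    refine ⟨a' / a, div_ne_zero ha' ha, (div_mul_cancel₀ a' ha).symm, ?_⟩
    field_simp
    linear_combination -h

end

open Function

lemma eVec_singleton {n : ℕ} (i : Fin n) : eVec n {i} = Pi.single i 1 := by
  funext x
  by_cases h : x = i <;> simp [eVec, h]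

lemma eVec_pair {n : ℕ} {i j : Fin n} (hij : i ≠ j) :
    eVec n {i, j} = eVec n {i} + eVec n {j} := by
  funext x
  by_cases hi : x = i <;> by_cases hj : x = j <;> simp_all [eVec]

namespace ScalarSystem

variable {n : ℕ} {k : Type*} [Field k] {q : k} (Γ : ScalarSystem n k q)

lemma gamma_ne_zero {S T : Finset (Fin n)} (h : Disjoint S T) (lam : Fin n → ℤ) :
    Γ.γ S T lam ≠ 0 :=
  left_ne_zero_of_mul_eq_one (Γ.rel1 S T lam h)

lemma gamma_sub_eVec_sub_eVec {S T : Finset (Fin n)} (h : Disjoint S T) (lam : Fin n → ℤ) :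
    Γ.γ S T (lam - eVec n S - eVec n T) = Γ.γ S T lam :=
  (eq_inv_of_mul_eq_one_right (Γ.rel1 T S (lam - eVec n S) h.symm)).trans
    (eq_inv_of_mul_eq_one_left (Γ.rel1 S T lam h)).symm

lemma periodic_gamma_eVec_add_eVec {S T : Finset (Fin n)} (h : Disjoint S T) :
    Periodic (Γ.γ S T) (eVec n S + eVec n T) := fun lam => by
  simpa [sub_sub] using (Γ.gamma_sub_eVec_sub_eVec h (lam + (eVec n S + eVec n T))).symm

/-- Relation (iii) for `S = {j}`, with the factor `γ({i},{j};λ - e_{ij})` rewritten by (i). -/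
lemma gamma_pair_mul_gamma_mul_gamma_pair {i j l : Fin n} (hij : i ≠ j) (hjl : j ≠ l)
    (hil : i ≠ l) (lam : Fin n → ℤ) :
    Γ.γ {i} {j, l} lam * Γ.γ {j} {l} lam * Γ.γ {l} {i, j} (lam - eVec n {i, j})
      = Γ.γ {i} {j} lam := by
  have h3 := Γ.rel3 {j} l i lam hil.symm (by simp [hjl.symm]) (by simp [hij])
  have h1 := Γ.rel1 {i} {j, l} lam (by simp [hil, hij])
  have hij_shift : Γ.γ {i} {j} (lam - eVec n {i, j}) = Γ.γ {i} {j} lam := by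
    rw [eVec_pair hij, ← sub_sub]
    exact Γ.gamma_sub_eVec_sub_eVec (Finset.disjoint_singleton.mpr hij) lam
  rw [Finset.pair_comm l j, hij_shift] at h3
  linear_combination Γ.γ {i} {j, l} lam * h3 + Γ.γ {i} {j} lam * h1

lemma periodic_gamma_eVec_of_ne (h2 : q + q⁻¹ ≠ 0) {i j l : Fin n} (hij : i ≠ j)
    (hil : i ≠ l) (hjl : j ≠ l) : Periodic (Γ.γ {i} {j}) (eVec n {l}) := by
  intro lam
  have hi := Γ.gamma_pair_mul_gamma_mul_gamma_pair hij hjl hil lam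
  have hj := Γ.gamma_pair_mul_gamma_mul_gamma_pair hij.symm hil hjl lam
  have h4i := Γ.rel4 {i} {j} {l} lam (by simpa) (by simpa) (by simpa)
  have h4j := Γ.rel4 {j} {i} {l} lam (by simpa [eq_comm]) (by simpa) (by simpa)
  rw [Finset.pair_comm j i] at hj
  simp only [← Finset.insert_eq] at h4i h4j
  rw [Finset.pair_comm j i] at h4j
  set u := Γ.γ {i, j} {l} lam * Γ.γ {l} {i, j} (lam - eVec n {i, j})
  -- multiplying by `u` recovers the unshifted values, and the two of them sum to `[2]_q ≠ 0`
  have hu : u = 1 := by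
    refine mul_left_cancel₀ h2 ?_
    linear_combination (Γ.rel5 i j lam hij) - u * Γ.rel5 i j (lam + eVec n {l}) hij
      + (Γ.γ {l} {i, j} (lam - eVec n {i, j})) * (h4i + h4j) + hi + hj
  linear_combination -(Γ.γ {i} {j} (lam + eVec n {l})) * hu
    + (Γ.γ {l} {i, j} (lam - eVec n {i, j})) * h4i + hi

lemma gamma_eq_of_sub_eq (h2 : q + q⁻¹ ≠ 0) {i j : Fin n} (hij : i ≠ j)
    {lam mu : Fin n → ℤ} (h : lam i - lam j = mu i - mu j) :
    Γ.γ {i} {j} lam = Γ.γ {i} {j} mu := by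
  set v := eVec n {i} + eVec n {j}
  set δ := lam - mu - (lam j - mu j) • v
  have hδ : ∀ x, x = i ∨ x = j → δ x = 0 := by
    rintro x (rfl | rfl)
    · simp [δ, v, eVec, hij]; omega
    · simp [δ, v, eVec, hij.symm]
  have hper_δ : Periodic (Γ.γ {i} {j}) δ := by
    rw [← Finset.univ_sum_single δ]
    refine Finset.sum_induction _ _ (fun _ _ => Periodic.add_period)
      (periodic_with_period_zero _) fun x _ => ?_
    by_cases hx : x = i ∨ x = j
    · rw [hδ x hx, Pi.single_zero]
      exact periodic_with_period_zero _
    · rw [not_or] at hx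
      rw [← mul_one (δ x), ← smul_eq_mul, Pi.single_smul, ← eVec_singleton]
      exact (Γ.periodic_gamma_eVec_of_ne h2 hij (Ne.symm hx.1) (Ne.symm hx.2)).zsmul _
  have hper_v : Periodic (Γ.γ {i} {j}) v :=
    Γ.periodic_gamma_eVec_add_eVec (Finset.disjoint_singleton.mpr hij)
  calc Γ.γ {i} {j} lam = Γ.γ {i} {j} (mu + ((lam j - mu j) • v + δ)) := by
        congr 1; simp only [δ]; abel
    _ = Γ.γ {i} {j} mu := ((hper_v.zsmul _).add_period hper_δ) mu

lemma gamma_pair_eq_mul (h2 : q + q⁻¹ ≠ 0) {i j l : Fin n} (hij : i ≠ j) (hjl : j ≠ l)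
    (hil : i ≠ l) (lam : Fin n → ℤ) :
    Γ.γ {i} {j, l} lam = Γ.γ {i} {j} lam * Γ.γ {i} {l} lam := by
  have hY := Γ.rel4 {i} {l} {j} lam (by simpa) (by simpa) (by simpa [eq_comm])
  have hZ := Γ.rel4 {j} {l} {i} lam (by simpa) (by simpa [eq_comm]) (by simpa [eq_comm])
  simp only [← Finset.insert_eq] at hY hZ
  rw [Γ.periodic_gamma_eVec_of_ne h2 hil hij hjl.symm, Finset.pair_comm l j] at hY
  rw [Γ.periodic_gamma_eVec_of_ne h2 hjl hij.symm hil.symm, Finset.pair_comm l i] at hZ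
  have hi := Γ.gamma_pair_mul_gamma_mul_gamma_pair hij hjl hil lam
  have hj := Γ.gamma_pair_mul_gamma_mul_gamma_pair hij.symm hil hjl lam
  rw [Finset.pair_comm j i] at hj
  have hR : Γ.γ {j} {i, l} lam * Γ.γ {i} {l} lam * Γ.γ {i} {j} lam
      = Γ.γ {i} {j, l} lam * Γ.γ {j} {l} lam * Γ.γ {j} {i} lam :=
    mul_right_cancel₀
      (Γ.gamma_ne_zero (S := {l}) (T := {i, j}) (by simp [hil.symm, hjl.symm]) _)
      (by linear_combination Γ.γ {i} {j} lam * hj - Γ.γ {j} {i} lam * hi)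
  have h2' := Γ.rel2 {l} i j lam hij (by simpa using hil) (by simpa using hjl)
  have hlj := Γ.rel1 {l} {j} lam (by simpa [eq_comm])
  have hli := Γ.rel1 {l} {i} lam (by simpa [eq_comm])
  set N := Γ.γ {j} {l} lam * Γ.γ {l} {j} lam * Γ.γ {l} {i} lam
  have hN : N ≠ 0 := by
    simp only [N]
    refine mul_ne_zero (mul_ne_zero ?_ ?_) ?_ <;> exact Γ.gamma_ne_zero (by simpa [eq_comm]) lam
  have key : (Γ.γ {i} {j} lam + Γ.γ {j} {i} lam) * Γ.γ {i} {j, l} lam * N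
      = (q + q⁻¹) * (Γ.γ {i} {j} lam * Γ.γ {i} {l} lam) * N := by
    linear_combination Γ.γ {i} {j} lam * Γ.γ {i} {l} lam * N * h2'
      - Γ.γ {i, l} {j} lam * Γ.γ {i} {j} lam * Γ.γ {i} {l} lam * Γ.γ {j} {l} lam
        * Γ.γ {l} {i} lam * hlj
      - Γ.γ {i} {j} lam * Γ.γ {j} {l} lam * Γ.γ {l} {i} lam * hY
      - Γ.γ {j, l} {i} lam * Γ.γ {i} {j} lam * Γ.γ {i} {l} lam * Γ.γ {j} {l} lam
        * Γ.γ {l} {j} lam * hli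
      - Γ.γ {i} {j} lam * Γ.γ {i} {l} lam * Γ.γ {l} {j} lam * hZ
      - Γ.γ {l} {i} lam * Γ.γ {l} {j} lam * hR
  rw [Γ.rel5 i j lam hij] at key
  exact mul_left_cancel₀ h2 (mul_right_cancel₀ hN key)

lemma gamma_mul_add_inv_sub_gamma_sub_eVec {i j : Fin n} (hij : i ≠ j) (lam : Fin n → ℤ) :
    Γ.γ {i} {j} lam * (q + q⁻¹ - Γ.γ {i} {j} (lam - eVec n {i})) = 1 := by
  linear_combination Γ.rel1 {i} {j} lam (by simpa)
    - Γ.γ {i} {j} lam * Γ.rel5 j i (lam - eVec n {i}) hij.symm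

/-- The parameters are normalized by `a - b = q⁻¹ - q`; evaluating the formula for
`γ({i},{j};λ)` at `λ = 0` then forces `a = γ({i},{j};0) - q`. -/
def toricA (i j : Fin n) : k := Γ.γ {i} {j} 0 - q

def toricB (i j : Fin n) : k := Γ.γ {i} {j} 0 - q⁻¹

lemma toricA_sub_toricB (i j : Fin n) : Γ.toricA i j - Γ.toricB i j = q⁻¹ - q := by
  simp only [toricA, toricB]; ring

lemma toric_params_ne_zero (hq' : q⁻¹ ≠ q) (i j : Fin n) :
    ¬(Γ.toricA i j = 0 ∧ Γ.toricB i j = 0) := fun ⟨ha, hb⟩ =>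
  hq' (sub_eq_zero.mp (by rw [← Γ.toricA_sub_toricB, ha, hb, sub_zero]))

lemma gamma_mul_toric_denom (hq : q ≠ 0) (hq' : q⁻¹ ≠ q) (h2 : q + q⁻¹ ≠ 0)
    {i j : Fin n} (hij : i ≠ j) (lam : Fin n → ℤ) :
    Γ.toricA i j * q ^ (lam i - lam j) - Γ.toricB i j * q ^ (lam j - lam i) ≠ 0 ∧
      Γ.γ {i} {j} lam
          * (Γ.toricA i j * q ^ (lam i - lam j) - Γ.toricB i j * q ^ (lam j - lam i))
        = Γ.toricA i j * q ^ (lam i - lam j - 1) - Γ.toricB i j * q ^ (lam j - lam i + 1) := by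
  have hg : ∀ m : ℤ, Γ.γ {i} {j} (Pi.single i m)
      * (q + q⁻¹ - Γ.γ {i} {j} (Pi.single i (m - 1))) = 1 := fun m => by
    rw [← Γ.gamma_eq_of_sub_eq h2 hij (lam := Pi.single i m - eVec n {i})
      (mu := Pi.single i (m - 1)) (by simp [eVec, hij.symm])]
    exact Γ.gamma_mul_add_inv_sub_gamma_sub_eVec hij _
  have hrec := mul_zpow_sub_mul_zpow_of_recurrence hq hq' hg (lam i - lam j)
  rw [Γ.gamma_eq_of_sub_eq h2 hij (mu := Pi.single i (lam i - lam j)) (by simp [hij.symm])]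
  rw [neg_sub, show -(lam i - lam j - 1) = lam j - lam i + 1 by ring, Pi.single_zero] at hrec
  exact hrec

lemma toricA_mul_toricA {i j : Fin n} (hij : i ≠ j) :
    Γ.toricA i j * Γ.toricA j i = Γ.toricB i j * Γ.toricB j i := by
  simp only [toricA, toricB]
  linear_combination (q⁻¹ - q) * Γ.rel5 i j 0 hij

lemma gamma_mul_gamma_add_gamma_mul_gamma_add_gamma_mul_gamma (h2 : q + q⁻¹ ≠ 0)
    {i j l : Fin n} (hij : i ≠ j) (hjl : j ≠ l) (hil : i ≠ l) (lam : Fin n → ℤ) :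
    Γ.γ {i} {j} lam * Γ.γ {i} {l} lam + Γ.γ {j} {i} lam * Γ.γ {j} {l} lam
      + Γ.γ {l} {j} lam * Γ.γ {l} {i} lam = q * q + 1 + q⁻¹ * q⁻¹ := by
  rw [← Γ.rel6 i j l lam hij hjl hil, Γ.gamma_pair_eq_mul h2 hij hjl hil,
    Γ.gamma_pair_eq_mul h2 hjl hil.symm hij.symm, Γ.gamma_pair_eq_mul h2 hil.symm hij hjl.symm]
  ring

lemma toricA_mul_toricA_mul_toricB (hq : q ≠ 0) (h2 : q + q⁻¹ ≠ 0) {i j l : Fin n}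
    (hij : i ≠ j) (hjl : j ≠ l) (hil : i ≠ l) :
    Γ.toricA i j * Γ.toricA j l * Γ.toricB i l
      = Γ.toricB i j * Γ.toricB j l * Γ.toricA i l := by
  have h3 := Γ.gamma_mul_gamma_add_gamma_mul_gamma_add_gamma_mul_gamma h2 hij hjl hil 0
  rw [eq_sub_of_add_eq' (Γ.rel5 i j 0 hij), eq_sub_of_add_eq' (Γ.rel5 j l 0 hjl),
    eq_sub_of_add_eq' (Γ.rel5 i l 0 hil)] at h3
  simp only [toricA, toricB]
  linear_combination (q⁻¹ - q) * h3 - (q⁻¹ - q) * mul_inv_cancel₀ hq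

lemma exists_eq_mul_toric_params (hq' : q⁻¹ ≠ q) {i j : Fin n} {a b : k}
    (hab : ¬(a = 0 ∧ b = 0)) (h : Γ.γ {i} {j} 0 * (a - b) = a * q⁻¹ - b * q) :
    ∃ c, c ≠ 0 ∧ a = c * Γ.toricA i j ∧ b = c * Γ.toricB i j :=
  exists_eq_mul_of_mul_eq_mul (Γ.toric_params_ne_zero hq' i j) hab
    (by simp only [toricA, toricB]; linear_combination h)

end ScalarSystem

theorem scalarSystem_toric_parameters_general {n : ℕ}
    {k : Type*} [Field k]
    (q : k) (hq : q ≠ 0) (hroot : ∀ m : ℤ, m ≠ 0 → q ^ m ≠ 1)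
    (Γ : ScalarSystem n k q) :
    ∃ a b : Fin n → Fin n → k,
      (∀ i j : Fin n, i ≠ j → ¬(a i j = 0 ∧ b i j = 0)) ∧
      (∀ (i j : Fin n), i ≠ j → ∀ lam : Fin n → ℤ,
        a i j * q ^ (lam i - lam j) - b i j * q ^ (lam j - lam i) ≠ 0 ∧
        Γ.γ {i} {j} lam * (a i j * q ^ (lam i - lam j) - b i j * q ^ (lam j - lam i))
          = a i j * q ^ (lam i - lam j - 1) - b i j * q ^ (lam j - lam i + 1)) ∧
      (∀ i j : Fin n, i ≠ j → a i j * a j i = b i j * b j i) ∧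
      (∀ i j l : Fin n, i ≠ j → j ≠ l → i ≠ l →
        a i j * a j l * b i l = b i j * b j l * a i l) ∧
      (∀ (i j : Fin n), i ≠ j → ∀ a' b' : k, ¬(a' = 0 ∧ b' = 0) →
        (∀ lam : Fin n → ℤ,
          a' * q ^ (lam i - lam j) - b' * q ^ (lam j - lam i) ≠ 0 ∧
          Γ.γ {i} {j} lam * (a' * q ^ (lam i - lam j) - b' * q ^ (lam j - lam i))
            = a' * q ^ (lam i - lam j - 1) - b' * q ^ (lam j - lam i + 1)) →
        ∃ c : k, c ≠ 0 ∧ a' = c * a i j ∧ b' = c * b i j) := by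
  have hq' : q⁻¹ ≠ q := inv_ne_self_of_sq_ne_one hq (by simpa using hroot 2 (by norm_num))
  have h2 : q + q⁻¹ ≠ 0 :=
    add_inv_ne_zero_of_pow_four_ne_one hq (by simpa using hroot 4 (by norm_num))
  refine ⟨Γ.toricA, Γ.toricB, fun i j _ => Γ.toric_params_ne_zero hq' i j,
    fun i j hij => Γ.gamma_mul_toric_denom hq hq' h2 hij, fun i j hij => Γ.toricA_mul_toricA hij,
    fun i j l hij hjl hil => Γ.toricA_mul_toricA_mul_toricB hq h2 hij hjl hil,
    fun i j _ a' b' hab' h' => Γ.exists_eq_mul_toric_params hq' hab' ?_⟩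
  simpa using (h' 0).2

/-- Lemma 5.11: for a scalar system of `SL_n`-type there exist, for each
ordered pair `(i,j)` of distinct indices, parameters `[a_{ij} : b_{ij}] ∈ ℙ¹(k)`
avoiding `q^{2ℤ}` such that
`γ({i},{j};λ) = (a_{ij} q^{λ_i−λ_j−1} − b_{ij} q^{λ_j−λ_i+1})/(a_{ij} q^{λ_i−λ_j} − b_{ij} q^{λ_j−λ_i})`,
satisfying the toric relations `a_{ij} a_{ji} = b_{ij} b_{ji}` and
`a_{ij} a_{jk} b_{ik} = b_{ij} b_{jk} a_{ik}`; moreover the parameters for each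
pair are unique up to a common nonzero scalar. -/
theorem scalarSystem_toric_parameters {n : ℕ} (hn : 1 ≤ n)
    {k : Type*} [Field k] [CharZero k]
    (q : k) (hq : q ≠ 0) (hroot : ∀ m : ℤ, m ≠ 0 → q ^ m ≠ 1)
    (Γ : ScalarSystem n k q) :
    ∃ a b : Fin n → Fin n → k,
      (∀ i j : Fin n, i ≠ j → ¬(a i j = 0 ∧ b i j = 0)) ∧
      (∀ (i j : Fin n), i ≠ j → ∀ lam : Fin n → ℤ,
        a i j * q ^ (lam i - lam j) - b i j * q ^ (lam j - lam i) ≠ 0 ∧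
        Γ.γ {i} {j} lam * (a i j * q ^ (lam i - lam j) - b i j * q ^ (lam j - lam i))
          = a i j * q ^ (lam i - lam j - 1) - b i j * q ^ (lam j - lam i + 1)) ∧
      (∀ i j : Fin n, i ≠ j → a i j * a j i = b i j * b j i) ∧
      (∀ i j l : Fin n, i ≠ j → j ≠ l → i ≠ l →
        a i j * a j l * b i l = b i j * b j l * a i l) ∧
      (∀ (i j : Fin n), i ≠ j → ∀ a' b' : k, ¬(a' = 0 ∧ b' = 0) →
        (∀ lam : Fin n → ℤ,
          a' * q ^ (lam i - lam j) - b' * q ^ (lam j - lam i) ≠ 0 ∧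
          Γ.γ {i} {j} lam * (a' * q ^ (lam i - lam j) - b' * q ^ (lam j - lam i))
            = a' * q ^ (lam i - lam j - 1) - b' * q ^ (lam j - lam i + 1)) →
        ∃ c : k, c ≠ 0 ∧ a' = c * a i j ∧ b' = c * b i j) :=
  scalarSystem_toric_parameters_general q hq hroot Γ
end

section
/- Let γ be a scalar system of SL_n-type. For all disjoint subsets S, T ⊆ {1,…,n}, every element i ∈ {1,…,n} with i ∉ S∪T, and every λ ∈ ℤ^n, one has γ(S∪{i}, T; λ) = γ({i}, T; λ + e_S) · γ(S, T; λ). -/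
open Finset

lemma eVec_empty (n : ℕ) : eVec n (∅ : Finset (Fin n)) = 0 := by
  funext j; simp [eVec]

lemma eVec_union (n : ℕ) {S T : Finset (Fin n)} (h : Disjoint S T) :
    eVec n (S ∪ T) = eVec n S + eVec n T := by
  funext j
  simp only [eVec, Pi.add_apply, Finset.mem_union]
  by_cases hS : j ∈ S
  · have hT : j ∉ T := Finset.disjoint_left.mp h hS
    simp [hS, hT]
  · by_cases hT : j ∈ T <;> simp [hS, hT]

lemma eVec_insert (n : ℕ) {S : Finset (Fin n)} {a : Fin n} (h : a ∉ S) :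
    eVec n (insert a S) = eVec n {a} + eVec n S := by
  rw [Finset.insert_eq, eVec_union n (Finset.disjoint_singleton_left.mpr h)]

lemma ScalarSystem.gamma_ne_zero_s10 {n : ℕ} {k : Type*} [Field k] {q : k}
    (Γ : ScalarSystem n k q) (S T : Finset (Fin n)) (lam : Fin n → ℤ)
    (h : Disjoint S T) : Γ.γ S T lam ≠ 0 :=
  left_ne_zero_of_mul_eq_one (Γ.rel1 S T lam h)

/-- The key "one-step right factorization" lemma:
`γ({x}, A∪{y}; ρ) = γ({x},A;ρ+e_y) ⬝ γ({x},{y};ρ+e_A)`. -/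
lemma ScalarSystem.right_split {n : ℕ} {k : Type*} [Field k] [CharZero k] {q : k}
    (ht : q + q⁻¹ ≠ 0) (Γ : ScalarSystem n k q)
    (A : Finset (Fin n)) (x y : Fin n) (ρ : Fin n → ℤ)
    (hxy : x ≠ y) (hxA : x ∉ A) (hyA : y ∉ A) :
    Γ.γ {x} (insert y A) ρ
      = Γ.γ {x} A (ρ + eVec n {y}) * Γ.γ {x} {y} (ρ + eVec n A) := by
  have hyx : y ≠ x := hxy.symm
  -- disjointness facts
  have dAx : Disjoint A ({x} : Finset (Fin n)) := Finset.disjoint_singleton_right.mpr hxA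
  have dAy : Disjoint A ({y} : Finset (Fin n)) := Finset.disjoint_singleton_right.mpr hyA
  have dxA : Disjoint ({x} : Finset (Fin n)) A := Finset.disjoint_singleton_left.mpr hxA
  have dyA : Disjoint ({y} : Finset (Fin n)) A := Finset.disjoint_singleton_left.mpr hyA
  have dxy : Disjoint ({x} : Finset (Fin n)) ({y} : Finset (Fin n)) :=
    Finset.disjoint_singleton_left.mpr (fun h => hxy (Finset.mem_singleton.mp h))
  have dyx : Disjoint ({y} : Finset (Fin n)) ({x} : Finset (Fin n)) := dxy.symm
  have dAxy : Disjoint A (insert x {y}) := by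
    simp [Finset.disjoint_insert_right, hxA, Finset.disjoint_singleton_right, hyA]
  have dAyx : Disjoint A (insert y {x}) := by
    simp [Finset.disjoint_insert_right, hyA, Finset.disjoint_singleton_right, hxA]
  -- point equalities
  have pt1 : (ρ + eVec n A + eVec n {y}) - eVec n (insert y A) = ρ := by
    rw [eVec_insert n hyA]; abel
  have pt2 : (ρ + eVec n A + eVec n {y}) - eVec n {y} = ρ + eVec n A := by abel
  have pt3 : (ρ + eVec n A + eVec n {y}) - eVec n A = ρ + eVec n {y} := by abel
  have pt1' : (ρ + eVec n A + eVec n {x}) - eVec n (insert x A) = ρ := by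
    rw [eVec_insert n hxA]; abel
  have pt2' : (ρ + eVec n A + eVec n {x}) - eVec n {x} = ρ + eVec n A := by abel
  have pt3' : (ρ + eVec n A + eVec n {x}) - eVec n A = ρ + eVec n {x} := by abel
  have pt5 : (ρ + eVec n A) - eVec n A = ρ := by abel
  -- relation instances (unprimed)
  have hEa := Γ.rel3 A x y (ρ + eVec n A + eVec n {y}) hxy hxA hyA
  rw [pt1, pt2] at hEa
  -- hEa : Γ.γ A {x} Λ * Γ.γ {x} (insert y A) ρ = Γ.γ (insert x A) {y} (ρ+e_A) * Γ.γ {y} A ρ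
  have hB := Γ.rel1 A {x} (ρ + eVec n A + eVec n {y}) dAx
  rw [pt3] at hB
  have hEc := Γ.rel4 A {x} {y} (ρ + eVec n A) dAx dAy dxy
  rw [Finset.union_comm A {x}, ← Finset.insert_eq, ← Finset.insert_eq] at hEc
  have hEd := Γ.rel1 A (insert x {y}) (ρ + eVec n A) dAxy
  rw [pt5] at hEd
  have hEe := Γ.rel4 {x} {y} A ρ dxy dxA dyA
  rw [← Finset.insert_eq, ← Finset.insert_eq] at hEe
  -- relation instances (primed: swap x and y)
  have hEa' := Γ.rel3 A y x (ρ + eVec n A + eVec n {x}) hyx hyA hxA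
  rw [pt1', pt2'] at hEa'
  have hB' := Γ.rel1 A {y} (ρ + eVec n A + eVec n {x}) dAy
  rw [pt3'] at hB'
  have hEc' := Γ.rel4 A {y} {x} (ρ + eVec n A) dAy dAx dyx
  rw [Finset.union_comm A {y}, ← Finset.insert_eq, ← Finset.insert_eq] at hEc'
  have hEd' := Γ.rel1 A (insert y {x}) (ρ + eVec n A) dAyx
  rw [pt5] at hEd'
  have hEe' := Γ.rel4 {y} {x} A ρ dyx dyA dxA
  rw [← Finset.insert_eq, ← Finset.insert_eq] at hEe'
  -- rel2 and rel5 instances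
  have h25 := Γ.rel2 A x y (ρ + eVec n A) hxy hxA hyA
  rw [pt5] at h25
  have h5 := Γ.rel5 x y (ρ + eVec n A) hxy
  -- abbreviations
  set P := Γ.γ A {x} (ρ + eVec n A + eVec n {y}) with hPdef
  set u := Γ.γ {x} (insert y A) ρ with hudef
  set R := Γ.γ (insert x A) {y} (ρ + eVec n A) with hRdef
  set g := Γ.γ {y} A ρ with hgdef
  set v := Γ.γ {x} A (ρ + eVec n {y}) with hvdef
  set Q := Γ.γ A (insert x {y}) (ρ + eVec n A) with hQdef
  set Z := Γ.γ (insert x {y}) A ρ with hZdef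
  set w := Γ.γ {x} {y} (ρ + eVec n A) with hwdef
  set P' := Γ.γ A {y} (ρ + eVec n A + eVec n {x}) with hP'def
  set u' := Γ.γ {y} (insert x A) ρ with hu'def
  set R' := Γ.γ (insert y A) {x} (ρ + eVec n A) with hR'def
  set g' := Γ.γ {x} A ρ with hg'def
  set v' := Γ.γ {y} A (ρ + eVec n {x}) with hv'def
  set Q' := Γ.γ A (insert y {x}) (ρ + eVec n A) with hQ'def
  set Z' := Γ.γ (insert y {x}) A ρ with hZ'def
  set w' := Γ.γ {y} {x} (ρ + eVec n A) with hw'def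
  -- nonvanishing
  have hw : w ≠ 0 := Γ.gamma_ne_zero_s10 _ _ _ dxy
  have hw' : w' ≠ 0 := Γ.gamma_ne_zero_s10 _ _ _ dyx
  -- square identities
  have h1 : P ^ 2 * u ^ 2 = w ^ 2 := by
    linear_combination (P * u) * hEa + (g * u) * hEc + w ^ 2 * hEd - (Q * w) * hEe
  have h2 : u ^ 2 = v ^ 2 * w ^ 2 := by
    linear_combination v ^ 2 * h1 - u ^ 2 * (P * v + 1) * hB
  have h1' : P' ^ 2 * u' ^ 2 = w' ^ 2 := by
    linear_combination (P' * u') * hEa' + (g' * u') * hEc' + w' ^ 2 * hEd' - (Q' * w') * hEe'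
  have h2' : u' ^ 2 = v' ^ 2 * w' ^ 2 := by
    linear_combination v' ^ 2 * h1' - u' ^ 2 * (P' * v' + 1) * hB'
  have hfac : (u - v * w) * (u + v * w) = 0 := by linear_combination h2
  have hfac' : (u' - v' * w') * (u' + v' * w') = 0 := by linear_combination h2'
  -- case analysis
  rcases mul_eq_zero.mp hfac with hu | hu
  · exact sub_eq_zero.mp hu
  · exfalso
    have hu2 : u = -(v * w) := eq_neg_of_add_eq_zero_left hu
    have hRg : R * g = -w := by
      linear_combination (-1 : k) * hEa + P * hu2 + (-w) * hB
    rcases mul_eq_zero.mp hfac' with hu' | hu'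
    · have hu'2 : u' = v' * w' := sub_eq_zero.mp hu'
      have hRg' : R' * g' = w' := by
        linear_combination (-1 : k) * hEa' + P' * hu'2 + w' * hB'
      have hww : (2 : k) * w = 0 := by linear_combination h5 - h25 + hRg + hRg'
      rcases mul_eq_zero.mp hww with h | h
      · exact (by norm_num : (2 : k) ≠ 0) h
      · exact hw h
    · have hu'2 : u' = -(v' * w') := eq_neg_of_add_eq_zero_left hu'
      have hRg' : R' * g' = -w' := by
        linear_combination (-1 : k) * hEa' + P' * hu'2 + (-w') * hB'
      have h2t : (2 : k) * (q + q⁻¹) = 0 := by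
        linear_combination (-1 : k) * h5 - h25 + hRg + hRg'
      rcases mul_eq_zero.mp h2t with h | h
      · exact (by norm_num : (2 : k) ≠ 0) h
      · exact ht h

/-- Multiplicativity of `γ({i}, -; λ)` over disjoint unions. -/
lemma ScalarSystem.star {n : ℕ} {k : Type*} [Field k] [CharZero k] {q : k}
    (ht : q + q⁻¹ ≠ 0) (Γ : ScalarSystem n k q) (T : Finset (Fin n)) :
    ∀ (S : Finset (Fin n)) (i : Fin n) (lam : Fin n → ℤ),
      Disjoint S T → i ∉ S → i ∉ T →
      Γ.γ {i} (S ∪ T) lam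
        = Γ.γ {i} S (lam + eVec n T) * Γ.γ {i} T (lam + eVec n S) := by
  induction T using Finset.induction_on with
  | empty =>
    intro S i lam _ _ _
    simp [eVec_empty, Γ.empty_right]
  | @insert t T' htT' ih =>
    intro S i lam hST hiS hiT
    have hit : i ≠ t := by
      intro h; exact hiT (by simp [h])
    have hiT' : i ∉ T' := fun h => hiT (Finset.mem_insert_of_mem h)
    obtain ⟨htS, hST'⟩ := Finset.disjoint_insert_right.mp hST
    have hiST' : i ∉ S ∪ T' := by
      simp only [Finset.mem_union]; rintro (h | h); exacts [hiS h, hiT' h]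
    have htST' : t ∉ S ∪ T' := by
      simp only [Finset.mem_union]; rintro (h | h); exacts [htS h, htT' h]
    have hW1 := Γ.right_split ht (S ∪ T') i t lam hit hiST' htST'
    have hIH := ih S i (lam + eVec n {t}) hST' hiS hiT'
    have hW2 := Γ.right_split ht T' i t (lam + eVec n S) hit hiT' htT'
    rw [Finset.union_insert, hW1, eVec_union n hST', hIH]
    rw [eVec_insert n htT', hW2]
    have a1 : lam + eVec n {t} + eVec n S = lam + eVec n S + eVec n {t} := by abel
    have a2 : lam + (eVec n S + eVec n T') = lam + eVec n S + eVec n T' := by abel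
    have a3 : lam + (eVec n {t} + eVec n T') = lam + eVec n {t} + eVec n T' := by abel
    rw [a1, a2, a3]
    ring

/-- From the proof of Proposition 5.8: for a scalar system of `SL_n`-type,
`γ(S∪{i}, T; λ) = γ({i}, T; λ + e_S) · γ(S, T; λ)` whenever `S` and `T` are
disjoint and `i ∉ S ∪ T`. -/
theorem scalarSystem_insert_left {n : ℕ} (hn : 1 ≤ n)
    {k : Type*} [Field k] [CharZero k]
    (q : k) (hq : q ≠ 0) (hroot : ∀ m : ℤ, m ≠ 0 → q ^ m ≠ 1)
    (Γ : ScalarSystem n k q) :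
    ∀ (S T : Finset (Fin n)) (i : Fin n) (lam : Fin n → ℤ),
      Disjoint S T → i ∉ S ∪ T →
      Γ.γ (insert i S) T lam = Γ.γ {i} T (lam + eVec n S) * Γ.γ S T lam := by
  have ht : q + q⁻¹ ≠ 0 := by
    intro h
    have hq2 : q * q = -1 := by
      have h' := congrArg (· * q) h
      simp only [add_mul, zero_mul] at h'
      rw [inv_mul_cancel₀ hq] at h'
      linear_combination h'
    apply hroot 4 (by norm_num)
    rw [show (4 : ℤ) = ((4 : ℕ) : ℤ) from rfl, zpow_natCast]
    rw [show q ^ 4 = (q * q) * (q * q) from by ring, hq2]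
    norm_num
  intro S T i lam hST hiST
  have hiS : i ∉ S := fun h => hiST (Finset.mem_union_left _ h)
  have hiT : i ∉ T := fun h => hiST (Finset.mem_union_right _ h)
  have diS : Disjoint ({i} : Finset (Fin n)) S := Finset.disjoint_singleton_left.mpr hiS
  have diT : Disjoint ({i} : Finset (Fin n)) T := Finset.disjoint_singleton_left.mpr hiT
  have h4 := Γ.rel4 {i} S T lam diS diT hST
  rw [← Finset.insert_eq] at h4
  have hstar := Γ.star ht T S i lam hST hiS hiT
  have hX : Γ.γ {i} S (lam + eVec n T) ≠ 0 := Γ.gamma_ne_zero_s10 _ _ _ diS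
  apply mul_left_cancel₀ hX
  linear_combination h4 + Γ.γ S T lam * hstar
end
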